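/- If A and B are finite nonempty subsets of an abelian group G with |A + B| ≤ K·|A| for some real K ≥ 1, then for every real δ with 0 < δ < 1 there exists a nonempty subset X ⊆ A with |X| ≥ (1-δ)·|A| such that for every positive integer k, |X + kB| ≤ (K/δ)^k · |X|, where kB denotes the k-fold sumset B + B + ... + B. -/

import Mathlib

/-!
Among the subsets `Y` of a nonempty set `C`, one minimising `#(Y + B) / #Y` satisfies the hypothesis
of the Plünnecke–Petridis inequality, so it iterates to `#(Y + n • B) ≤ r ^ n * #Y` for any
`r ≥ #(C + B) / #C`. Now take a largest `X ⊆ A` with `#(X + k • B) ≤ (K / δ) ^ k * #X` for all `k`.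
If `#X < (1 - δ) * #A`, the rest `C = A \ X` has more than `δ * #A` elements, hence
`#(C + B) ≤ #(A + B) ≤ K * #A < (K / δ) * #C`; the set `Y ⊆ C` found above can then be added to `X`,
contradicting maximality.
-/

open Finset Pointwise

namespace Finset

variable {G : Type*} [AddCommGroup G] [DecidableEq G]

lemma card_add_nsmul_le_of_forall_subset {X B : Finset G}
    (hX : ∀ X' ⊆ X, #(X + B) * #X' ≤ #(X' + B) * #X) (n : ℕ) :
    (#(X + n • B) : ℝ) ≤ (#(X + B) / #X : ℝ) ^ n * #X := by
  obtain rfl | hXne := X.eq_empty_or_nonempty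
  · simp
  have hX0 : (0 : ℝ) < #X := by exact_mod_cast hXne.card_pos
  induction n with
  | zero => simp
  | succ n ih =>
    refine le_of_mul_le_mul_right ?_ hX0
    calc (#(X + (n + 1) • B) * #X : ℝ)
        = #(n • B + X + B) * #X := by rw [succ_nsmul, add_comm (n • B) X, add_assoc]
      _ ≤ #(X + B) * #(n • B + X) := mod_cast pluennecke_petridis_inequality_add _ hX
      _ ≤ #(X + B) * ((#(X + B) / #X) ^ n * #X) := by rw [add_comm (n • B)]; gcongr
      _ = (#(X + B) / #X) ^ (n + 1) * #X * #X := by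
        rw [pow_succ, mul_assoc _ (_ / _), div_mul_cancel₀ _ hX0.ne']; ring

lemma exists_subset_card_add_nsmul_le {C B : Finset G} (hC : C.Nonempty) {r : ℝ}
    (hCB : #(C + B) ≤ r * #C) :
    ∃ Y ⊆ C, Y.Nonempty ∧ ∀ n : ℕ, (#(Y + n • B) : ℝ) ≤ r ^ n * #Y := by
  have hC' : C ∈ C.powerset.erase ∅ := mem_erase_of_ne_of_mem hC.ne_empty (mem_powerset_self _)
  obtain ⟨Y, hY, hYmin⟩ :=
    exists_min_image (C.powerset.erase ∅) (fun Y ↦ (#(Y + B) / #Y : ℝ)) ⟨C, hC'⟩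
  rw [mem_erase, mem_powerset, ← nonempty_iff_ne_empty] at hY
  obtain ⟨hYne, hYC⟩ := hY
  have hPetridis : ∀ Y' ⊆ Y, #(Y + B) * #Y' ≤ #(Y' + B) * #Y := by
    intro Y' hY'
    obtain rfl | hY'ne := Y'.eq_empty_or_nonempty
    · simp
    have := hYmin Y' (mem_erase_of_ne_of_mem hY'ne.ne_empty (mem_powerset.2 (hY'.trans hYC)))
    rw [div_le_div_iff₀ (by exact_mod_cast hYne.card_pos) (by exact_mod_cast hY'ne.card_pos)]
      at this
    exact_mod_cast this
  have hratio : (#(Y + B) / #Y : ℝ) ≤ r :=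
    (hYmin C hC').trans ((div_le_iff₀ (by exact_mod_cast hC.card_pos)).2 hCB)
  refine ⟨Y, hYC, hYne, fun n ↦ ?_⟩
  calc (#(Y + n • B) : ℝ) ≤ (#(Y + B) / #Y : ℝ) ^ n * #Y :=
        card_add_nsmul_le_of_forall_subset hPetridis n
    _ ≤ r ^ n * #Y := by gcongr

lemma card_union_add_le_of_disjoint {X Y S : Finset G} (hXY : Disjoint X Y) {c : ℝ}
    (hX : #(X + S) ≤ c * #X) (hY : #(Y + S) ≤ c * #Y) :
    #((X ∪ Y) + S) ≤ c * #(X ∪ Y) := by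
  rw [union_add, card_union_of_disjoint hXY, Nat.cast_add, mul_add]
  exact (Nat.cast_le.2 (card_union_le _ _)).trans (by push_cast; exact add_le_add hX hY)

lemma exists_subset_card_le_card_add_nsmul_le {A B : Finset G} {r t : ℝ} (ht : 0 ≤ t)
    (h : ∀ C ⊆ A, t < #C → #(C + B) ≤ r * #C) :
    ∃ X ⊆ A, #A - t ≤ #X ∧ ∀ n : ℕ, (#(X + n • B) : ℝ) ≤ r ^ n * #X := by
  classical
  let good := A.powerset.filter fun X ↦ ∀ n : ℕ, (#(X + n • B) : ℝ) ≤ r ^ n * #X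
  have hempty : ∅ ∈ good := by simp [good]
  obtain ⟨X, hXgood, hXmax⟩ := exists_max_image good card ⟨∅, hempty⟩
  simp only [good, mem_filter, mem_powerset] at hXgood hXmax
  obtain ⟨hXA, hX⟩ := hXgood
  refine ⟨X, hXA, ?_, hX⟩
  by_contra! hsmall
  have hC : t < #(A \ X) := by
    rw [card_sdiff_of_subset hXA, Nat.cast_sub (card_le_card hXA)]; linarith
  obtain ⟨Y, hYC, hYne, hY⟩ := exists_subset_card_add_nsmul_le
    (card_pos.1 (by exact_mod_cast ht.trans_lt hC)) (h _ sdiff_subset hC)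
  have hXY : Disjoint X Y := disjoint_of_subset_right hYC disjoint_sdiff
  have := hXmax (X ∪ Y) ⟨union_subset hXA (hYC.trans sdiff_subset),
    fun n ↦ card_union_add_le_of_disjoint hXY (hX n) (hY n)⟩
  rw [card_union_of_disjoint hXY] at this
  exact hYne.card_pos.ne' (by omega)

end Finset

theorem stmt_11_general {G : Type*} [AddCommGroup G] [DecidableEq G]
    (A B : Finset G) (hA : A.Nonempty) (K : ℝ)
    (hAB : ((A + B).card : ℝ) ≤ K * A.card) :
    ∀ δ : ℝ, 0 < δ → δ < 1 →
      ∃ X : Finset G, X ⊆ A ∧ X.Nonempty ∧ (1 - δ) * (A.card : ℝ) ≤ X.card ∧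
        ∀ k : ℕ, 0 < k → ((X + k • B).card : ℝ) ≤ (K / δ) ^ k * X.card := by
  intro δ hδ0 hδ1
  have hA0 : (0 : ℝ) < #A := by exact_mod_cast hA.card_pos
  have hK0 : 0 ≤ K := nonneg_of_mul_nonneg_left ((Nat.cast_nonneg _).trans hAB) hA0
  have hdoubling : ∀ C ⊆ A, δ * #A < #C → #(C + B) ≤ K / δ * #C := fun C hCA hC ↦
    calc (#(C + B) : ℝ) ≤ #(A + B) := mod_cast card_le_card (add_subset_add_right hCA)
      _ ≤ K / δ * (δ * #A) := by rwa [← mul_assoc, div_mul_cancel₀ _ hδ0.ne']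
      _ ≤ K / δ * #C := by gcongr
  obtain ⟨X, hXA, hXcard, hX⟩ := exists_subset_card_le_card_add_nsmul_le (by positivity) hdoubling
  have hlarge : (1 - δ) * #A ≤ #X := by linarith
  have hXne : X.Nonempty := card_pos.1 (by exact_mod_cast (by nlinarith : (0 : ℝ) < #X))
  exact ⟨X, hXA, hXne, hlarge, fun k _ ↦ hX k⟩

theorem stmt_11 {G : Type*} [AddCommGroup G] [DecidableEq G]
    (A B : Finset G) (hA : A.Nonempty) (hB : B.Nonempty) (K : ℝ) (hK : 1 ≤ K)
    (hAB : ((A + B).card : ℝ) ≤ K * A.card) :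
    ∀ δ : ℝ, 0 < δ → δ < 1 →
      ∃ X : Finset G, X ⊆ A ∧ X.Nonempty ∧ (1 - δ) * (A.card : ℝ) ≤ X.card ∧
        ∀ k : ℕ, 0 < k → ((X + k • B).card : ℝ) ≤ (K / δ) ^ k * X.card :=
  stmt_11_general A B hA K hAB
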